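/- Let M be a boolean R×C matrix and let G_M be its grid embedding. Then for every 1 ≤ k ≤ R and 1 ≤ j ≤ C, the shortest-path distance between a_j and b_k in G_M equals 2R·(C−j+1) + 2jk − 1 if M_{k,j} = 1, and equals 2R·(C−j+1) + 2jk if M_{k,j} = 0. -/

import Mathlib

/-- Vertices of the grid embedding: `a j` (top terminals), `b i` (right terminals),
`u i j` (grid intersections), `v i j` (subdivision vertex above `u i j`),
`w i j` (subdivision vertex to the right of `u i j`), `x i j` (shortcut vertices).
Indices are 1-based natural numbers; out-of-range vertices are isolated. -/
inductive GV : Type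
  | a (j : ℕ)
  | b (i : ℕ)
  | u (i j : ℕ)
  | v (i j : ℕ)
  | w (i j : ℕ)
  | x (i j : ℕ)
deriving DecidableEq

/-- One-directional edge weights of the grid embedding of a boolean `R × C` matrix `M`;
`⊤` means "no edge". -/
def dirW (R C : ℕ) (M : ℕ → ℕ → Bool) : GV → GV → ℕ∞
  | GV.a j, GV.v i' j' =>
      if i' = 1 ∧ j' = j ∧ 1 ≤ j ∧ j ≤ C then ((2 * j - 1 : ℕ) : ℕ∞) else ⊤
  | GV.v i j, GV.u i' j' =>
      if i' = i ∧ j' = j ∧ 1 ≤ i ∧ i ≤ R ∧ 1 ≤ j ∧ j ≤ C then 1 else ⊤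
  | GV.u i j, GV.v i' j' =>
      if i' = i + 1 ∧ j' = j ∧ 1 ≤ i ∧ i + 1 ≤ R ∧ 1 ≤ j ∧ j ≤ C then
        ((2 * j - 1 : ℕ) : ℕ∞) else ⊤
  | GV.u i j, GV.w i' j' =>
      if i' = i ∧ j' = j ∧ 1 ≤ i ∧ i ≤ R ∧ 1 ≤ j ∧ j ≤ C then 2 else ⊤
  | GV.w i j, GV.u i' j' =>
      if i' = i ∧ j' = j + 1 ∧ 1 ≤ i ∧ i ≤ R ∧ 1 ≤ j ∧ j + 1 ≤ C then
        ((2 * R - 2 : ℕ) : ℕ∞) else ⊤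
  | GV.w i j, GV.b i' =>
      if i' = i ∧ j = C ∧ 1 ≤ i ∧ i ≤ R ∧ 1 ≤ C then ((2 * R - 2 : ℕ) : ℕ∞) else ⊤
  | GV.v i j, GV.x i' j' =>
      if i' = i ∧ j' = j ∧ M i j = true ∧ 1 ≤ i ∧ i ≤ R ∧ 1 ≤ j ∧ j ≤ C then 1 else ⊤
  | GV.x i j, GV.w i' j' =>
      if i' = i ∧ j' = j ∧ M i j = true ∧ 1 ≤ i ∧ i ≤ R ∧ 1 ≤ j ∧ j ≤ C then 1 else ⊤
  | _, _ => ⊤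

/-- Symmetrization of a one-directional weight function. -/
noncomputable def symW {V : Type} (f : V → V → ℕ∞) : V → V → ℕ∞ := fun p q => min (f p q) (f q p)

/-- Edge weights of the grid embedding of a boolean matrix `M`. -/
noncomputable def gridW (R C : ℕ) (M : ℕ → ℕ → Bool) : GV → GV → ℕ∞ := symW (dirW R C M)

/-- One-directional edge weights of the weighted grid embedding of an `R × C` matrix `M`
with entries in `{0, …, X}`: the grid embedding of the all-ones boolean matrix with every
weight multiplied by `X²`, and the weight of each edge `(v i j, x i j)` increased by `M i j`. -/
def dirWt (R C X : ℕ) (M : ℕ → ℕ → ℕ) : GV → GV → ℕ∞ := fun p q =>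
  (X : ℕ∞) ^ 2 * dirW R C (fun _ _ => true) p q +
    (match p, q with
      | GV.v i j, GV.x i' j' => if i' = i ∧ j' = j then (M i j : ℕ∞) else 0
      | _, _ => 0)

/-- Edge weights of the weighted grid embedding of `M`. -/
noncomputable def wgridW (R C X : ℕ) (M : ℕ → ℕ → ℕ) : GV → GV → ℕ∞ := symW (dirWt R C X M)

/-- Edge weights of the mirrored grid `G'`: the (weighted, scaled by `X²`) grid embedding
with all shortcut vertices removed.  Mirroring is a weight-preserving graph isomorphism, so
the mirrored copy is represented by the same abstract graph. -/
noncomputable def mirW (R C X : ℕ) : GV → GV → ℕ∞ :=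
  fun p q => (X : ℕ∞) ^ 2 * gridW R C (fun _ _ => false) p q

/-- Total weight of a walk, given as its list of visited vertices. -/
def cost {V : Type} (W : V → V → ℕ∞) : List V → ℕ∞
  | p :: q :: l => W p q + cost W (q :: l)
  | _ => 0

/-- Shortest-path distance: the least total weight of a walk from `s` to `t`
(`⊤` if there is none; walks through a non-edge have cost `⊤`). -/
noncomputable def gdist {V : Type} (W : V → V → ℕ∞) (s t : V) : ℕ∞ :=
  sInf {c | ∃ l : List V, l.head? = some s ∧ l.getLast? = some t ∧ cost W l = c}

/-!
Upper bound: walk down column `j` from `a_j` to row `k` (each row costs `2j`), pass from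
`v_{k,j}` to `w_{k,j}` through the shortcut `x_{k,j}` (cost 2) or through `u_{k,j}` (cost 3),
then walk right along row `k` to `b_k` (each column costs `2R`).

Lower bound: if an integer potential changes by at most the weight along every edge, its
difference between two vertices bounds their distance from below. We exhibit such a potential
vanishing at `a_j` whose value at `b_k` is the claimed distance.
-/

lemma le_ite_top {α : Type*} [LE α] [OrderTop α] {P : Prop} [Decidable P] {a b : α}
    (h : P → a ≤ b) : a ≤ if P then b else ⊤ := by
  split_ifs with hP
  exacts [h hP, le_top]

section Walks

variable {V : Type}

lemma cost_append_cons (W : V → V → ℕ∞) (l l' : List V) (m : V) :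
    cost W (l ++ m :: l') = cost W (l ++ [m]) + cost W (m :: l') := by
  induction l with
  | nil => simp [cost]
  | cons p l ih =>
    cases l with
    | nil => simp [cost]
    | cons q l => simp only [List.cons_append, cost] at ih ⊢; rw [ih, add_assoc]

variable {W : V → V → ℕ∞}

lemma gdist_le_cost {s t : V} {l : List V} (hs : l.head? = some s) (ht : l.getLast? = some t) :
    gdist W s t ≤ cost W l :=
  sInf_le ⟨l, hs, ht, rfl⟩

lemma gdist_le_weight (p q : V) : gdist W p q ≤ W p q := by
  simpa [cost] using gdist_le_cost (W := W) (l := [p, q]) rfl rfl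

lemma exists_walk_cost_eq_gdist {s t : V} (h : gdist W s t ≠ ⊤) :
    ∃ l : List V, l.head? = some s ∧ l.getLast? = some t ∧ cost W l = gdist W s t := by
  refine csInf_mem
    (s := {c | ∃ l : List V, l.head? = some s ∧ l.getLast? = some t ∧ cost W l = c})
    (Set.nonempty_iff_ne_empty.2 fun he => h ?_)
  rw [gdist, he, sInf_empty]

lemma gdist_triangle (s m t : V) : gdist W s t ≤ gdist W s m + gdist W m t := by
  by_cases h₁ : gdist W s m = ⊤
  · simp [h₁]
  by_cases h₂ : gdist W m t = ⊤
  · simp [h₂]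
  obtain ⟨l₁, hs, hm₁, hc₁⟩ := exists_walk_cost_eq_gdist h₁
  obtain ⟨l₂, hm₂, ht, hc₂⟩ := exists_walk_cost_eq_gdist h₂
  obtain ⟨l₁, rfl⟩ := List.getLast?_eq_some_iff.mp hm₁
  obtain ⟨l₂, rfl⟩ := List.head?_eq_some_iff.mp hm₂
  rw [← hc₁, ← hc₂, ← cost_append_cons]
  apply gdist_le_cost
  · simpa [List.head?_append] using hs
  · simpa [List.getLast?_append] using ht

lemma gdist_symW_le {f : V → V → ℕ∞} (p q : V) : gdist (symW f) p q ≤ f p q :=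
  (gdist_le_weight p q).trans (min_le_left _ _)

lemma gdist_symW_le_add {f : V → V → ℕ∞} (s m t : V) :
    gdist (symW f) s t ≤ f s m + gdist (symW f) m t :=
  (gdist_triangle s m t).trans (add_le_add (gdist_symW_le s m) le_rfl)

lemma gdist_symW_le_add_add {f : V → V → ℕ∞} (s m₁ m₂ t : V) :
    gdist (symW f) s t ≤ f s m₁ + (f m₁ m₂ + gdist (symW f) m₂ t) :=
  (gdist_symW_le_add s m₁ t).trans (add_le_add le_rfl (gdist_symW_le_add m₁ m₂ t))

lemma natAbs_sub_le_symW {f : V → V → ℕ∞} {D : V → ℤ}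
    (hf : ∀ p q, ((D p - D q).natAbs : ℕ∞) ≤ f p q) (p q : V) :
    ((D p - D q).natAbs : ℕ∞) ≤ symW f p q := by
  refine le_min (hf p q) ?_
  rw [← neg_sub, Int.natAbs_neg]
  exact hf q p

lemma natAbs_sub_le_cost {D : V → ℤ} (hD : ∀ p q, ((D p - D q).natAbs : ℕ∞) ≤ W p q) :
    ∀ {s t : V} {l : List V}, l.head? = some s → l.getLast? = some t →
      ((D s - D t).natAbs : ℕ∞) ≤ cost W l
  | _, _, [], hs, _ => by simp at hs
  | _, _, [p], hs, ht => by simp_all [cost]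
  | _, t, p :: q :: l, hs, ht => by
    obtain rfl := Option.some_inj.mp hs
    calc ((D p - D t).natAbs : ℕ∞)
        ≤ ((D p - D q).natAbs + (D q - D t).natAbs : ℕ) := by gcongr; omega
      _ ≤ W p q + cost W (q :: l) := by
        push_cast
        exact add_le_add (hD p q) (natAbs_sub_le_cost hD rfl (by simpa using ht))
      _ = cost W (p :: q :: l) := rfl

lemma natAbs_sub_le_gdist {D : V → ℤ} (hD : ∀ p q, ((D p - D q).natAbs : ℕ∞) ≤ W p q)
    (s t : V) : ((D s - D t).natAbs : ℕ∞) ≤ gdist W s t := by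
  by_cases h : gdist W s t = ⊤
  · simp [h]
  obtain ⟨l, hs, ht, hc⟩ := exists_walk_cost_eq_gdist h
  exact hc ▸ natAbs_sub_le_cost hD hs ht

end Walks

namespace GridEmbedding

def shortcutSaving (k : ℕ) (m : Bool) (i : ℕ) : ℤ := if i = k ∧ m = false then 0 else 1

/-- A lower bound for the distance from `a_j`, used with `m = M k j`. In columns `c ≤ j` its
value at `u_{i,c}` is the vertical cost `2ci` plus `2(R + 1)` per column between `c` and `j`,
enough to pay for the `2i` saved by descending in a cheaper column. In columns `c > j` it is the
cost `2ji + 2R(c - j)` of descending column `j` and walking right, less a shortcut saving of `1`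
credited to every row except row `k` when `m = false`. -/
def potential (R C j k : ℕ) (m : Bool) : GV → ℤ
  | .a c => if c ≤ j then 2 * (R + 1) * (j - c) else 2 * j + 2 * R * (c - j)
  | .b i => 2 * j * i + 2 * R * (C - j + 1) - shortcutSaving k m i
  | .u i c => if c ≤ j then 2 * (R + 1) * (j - c) + 2 * c * i
      else 2 * j * i + 2 * R * (c - j) - shortcutSaving k m i
  | .v i c => if c ≤ j then 2 * (R + 1) * (j - c) + 2 * c * i - 1
      else 2 * j * i + 2 * R * (c - j)
  | .w i c => if c < j then 2 * (R + 1) * (j - c) + 2 * c * i - 2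
      else 2 * j * i + 2 * R * (c - j) + 2 - shortcutSaving k m i
  | .x i c => if c < j then 2 * (R + 1) * (j - c) + 2 * c * i - 1
      else if c = j then 2 * j * i else 2 * j * i + 2 * R * (c - j) + 1

variable {R C j k : ℕ}

section Potential

variable {m : Bool}

local notation "D" => potential R C j k m

lemma shortcutSaving_eq_zero_or_one (i : ℕ) :
    shortcutSaving k m i = 0 ∨ shortcutSaving k m i = 1 := by
  unfold shortcutSaving; split_ifs <;> simp

lemma potential_lipschitz_a_v {c : ℕ} (hc : 1 ≤ c) :
    (D (.a c) - D (.v 1 c)).natAbs ≤ 2 * c - 1 := by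
  rcases lt_trichotomy c j with h | rfl | h <;> simp only [potential] <;> split_ifs <;>
    ring_nf <;> omega

lemma potential_lipschitz_v_u (i c : ℕ) : (D (.v i c) - D (.u i c)).natAbs ≤ 1 := by
  have := shortcutSaving_eq_zero_or_one (k := k) (m := m) i
  rcases lt_trichotomy c j with h | rfl | h <;> simp only [potential] <;> split_ifs <;>
    ring_nf <;> omega

lemma potential_lipschitz_u_v (i : ℕ) {c : ℕ} (hc : 1 ≤ c) :
    (D (.u i c) - D (.v (i + 1) c)).natAbs ≤ 2 * c - 1 := by
  have := shortcutSaving_eq_zero_or_one (k := k) (m := m) i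
  rcases lt_trichotomy c j with h | rfl | h <;>
    simp only [potential, Nat.cast_add, Nat.cast_one] <;> split_ifs <;> ring_nf <;> omega

lemma potential_lipschitz_u_w (i c : ℕ) : (D (.u i c) - D (.w i c)).natAbs ≤ 2 := by
  have := shortcutSaving_eq_zero_or_one (k := k) (m := m) i
  rcases lt_trichotomy c j with h | rfl | h <;> simp only [potential] <;> split_ifs <;>
    ring_nf <;> omega

lemma potential_lipschitz_w_u {i c : ℕ} (hi : 1 ≤ i) (hiR : i ≤ R) :
    (D (.w i c) - D (.u i (c + 1))).natAbs ≤ 2 * R - 2 := by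
  rcases lt_trichotomy c j with h | rfl | h <;>
    simp only [potential, Nat.cast_add, Nat.cast_one] <;> split_ifs <;> ring_nf <;> omega

lemma potential_lipschitz_w_b {i : ℕ} (hjC : j ≤ C) (hR : 1 ≤ R) :
    (D (.w i C) - D (.b i)).natAbs ≤ 2 * R - 2 := by
  rcases hjC.lt_or_eq with h | rfl <;> simp only [potential] <;> split_ifs <;> ring_nf <;> omega

lemma potential_lipschitz_v_x (i c : ℕ) : (D (.v i c) - D (.x i c)).natAbs ≤ 1 := by
  rcases lt_trichotomy c j with h | rfl | h <;> simp only [potential] <;> split_ifs <;>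
    ring_nf <;> omega

end Potential

lemma potential_lipschitz_x_w {M : ℕ → ℕ → Bool} {i c : ℕ} (hM : M i c = true) :
    (potential R C j k (M k j) (.x i c) - potential R C j k (M k j) (.w i c)).natAbs ≤ 1 := by
  have := shortcutSaving_eq_zero_or_one (k := k) (m := M k j) i
  have hsave : c = j → shortcutSaving k (M k j) i = 1 := by
    rintro rfl
    simp only [shortcutSaving, ite_eq_right_iff, and_imp]
    rintro rfl h
    simp [h] at hM
  rcases lt_trichotomy c j with h | rfl | h <;> simp only [potential] <;> split_ifs <;>
    ring_nf <;> omega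

lemma potential_lipschitz_dirW {M : ℕ → ℕ → Bool} (hjC : j ≤ C) (p q : GV) :
    ((potential R C j k (M k j) p - potential R C j k (M k j) q).natAbs : ℕ∞) ≤
      dirW R C M p q := by
  cases p <;> cases q <;> simp only [dirW] <;> try exact le_top
  all_goals refine le_ite_top ?_
  case a.v =>
    rintro ⟨rfl, rfl, hc, -⟩
    exact_mod_cast potential_lipschitz_a_v hc
  case u.v =>
    rintro ⟨rfl, rfl, -, -, hc, -⟩
    exact_mod_cast potential_lipschitz_u_v _ hc
  case u.w =>
    rintro ⟨rfl, rfl, -⟩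
    exact_mod_cast potential_lipschitz_u_w _ _
  case v.u =>
    rintro ⟨rfl, rfl, -⟩
    exact_mod_cast potential_lipschitz_v_u _ _
  case v.x =>
    rintro ⟨rfl, rfl, -⟩
    exact_mod_cast potential_lipschitz_v_x _ _
  case w.u =>
    rintro ⟨rfl, rfl, hi, hiR, -⟩
    exact_mod_cast potential_lipschitz_w_u hi hiR
  case w.b =>
    rintro ⟨rfl, rfl, hi, hiR, -⟩
    exact_mod_cast potential_lipschitz_w_b hjC (hi.trans hiR)
  case x.w =>
    rintro ⟨rfl, rfl, hM, -⟩
    exact_mod_cast potential_lipschitz_x_w hM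

lemma natAbs_potential_a_b {m : Bool} (hk1 : 1 ≤ k) (hj1 : 1 ≤ j) (hjC : j ≤ C) :
    (potential R C j k m (.a j) - potential R C j k m (.b k)).natAbs =
      if m = true then 2 * R * (C - j + 1) + 2 * j * k - 1
      else 2 * R * (C - j + 1) + 2 * j * k := by
  obtain ⟨e, rfl⟩ := Nat.exists_eq_add_of_le hjC
  have : 0 < j * k := Nat.mul_pos hj1 hk1
  cases m <;> simp [potential, shortcutSaving] <;> ring_nf <;> omega

variable {M : ℕ → ℕ → Bool}

lemma gdist_w_b_le {i : ℕ} (hi : 1 ≤ i) (hiR : i ≤ R) :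
    ∀ d c, c + d = C → 1 ≤ c →
      gdist (gridW R C M) (.w i c) (.b i) ≤ ((2 * R * (d + 1) - 2 : ℕ) : ℕ∞)
  | 0, c, hC, hc => by
    obtain rfl : c = C := hC
    exact (gdist_symW_le (f := dirW R c M) _ _).trans_eq (by simp [dirW, hi, hiR, hc])
  | d + 1, c, hC, hc => by
    calc gdist (gridW R C M) (.w i c) (.b i)
        ≤ dirW R C M (.w i c) (.u i (c + 1)) + (dirW R C M (.u i (c + 1)) (.w i (c + 1)) +
            gdist (gridW R C M) (.w i (c + 1)) (.b i)) :=
          gdist_symW_le_add_add _ _ _ _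
      _ ≤ ((2 * R - 2 : ℕ) : ℕ∞) + (2 + ((2 * R * (d + 1) - 2 : ℕ) : ℕ∞)) := by
          gcongr
          · simp [dirW, hi, hiR, hc, (by omega : c + 1 ≤ C)]
          · simp [dirW, hi, hiR, (by omega : c + 1 ≤ C)]
          · exact gdist_w_b_le hi hiR d (c + 1) (by omega) (by omega)
      _ = ((2 * R * (d + 1 + 1) - 2 : ℕ) : ℕ∞) := by
          have : 2 ≤ 2 * R * (d + 1) := by nlinarith
          rw [mul_add_one (2 * R) (d + 1)]
          norm_cast
          omega

lemma gdist_v_w_le {i : ℕ} (hi : 1 ≤ i) (hiR : i ≤ R) (hj1 : 1 ≤ j) (hjC : j ≤ C) :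
    gdist (gridW R C M) (.v i j) (.w i j) ≤
      ((2 + if M i j = true then 0 else 1 : ℕ) : ℕ∞) := by
  cases hM : M i j
  · calc gdist (gridW R C M) (.v i j) (.w i j)
        ≤ dirW R C M (.v i j) (.u i j) + dirW R C M (.u i j) (.w i j) :=
          (gdist_symW_le_add _ _ _).trans (add_le_add le_rfl (gdist_symW_le _ _))
      _ = _ := by simp [dirW, hi, hiR, hj1, hjC]; norm_num
  · calc gdist (gridW R C M) (.v i j) (.w i j)
        ≤ dirW R C M (.v i j) (.x i j) + dirW R C M (.x i j) (.w i j) :=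
          (gdist_symW_le_add _ _ _).trans (add_le_add le_rfl (gdist_symW_le _ _))
      _ = _ := by simp [dirW, hi, hiR, hj1, hjC, hM]; norm_num

lemma gdist_v_b_le (hkR : k ≤ R) (hj1 : 1 ≤ j) (hjC : j ≤ C) :
    ∀ d i, i + d = k → 1 ≤ i → gdist (gridW R C M) (.v i j) (.b k) ≤
      ((2 * R * (C - j + 1) + 2 * j * d + if M k j = true then 0 else 1 : ℕ) : ℕ∞)
  | 0, i, hk, hi => by
    obtain rfl : i = k := by omega
    have hR : 2 ≤ 2 * R * (C - j + 1) := by nlinarith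
    calc gdist (gridW R C M) (.v i j) (.b i)
        ≤ gdist (gridW R C M) (.v i j) (.w i j) + gdist (gridW R C M) (.w i j) (.b i) :=
          gdist_triangle _ _ _
      _ ≤ ((2 + if M i j = true then 0 else 1 : ℕ) : ℕ∞) +
            ((2 * R * (C - j + 1) - 2 : ℕ) : ℕ∞) :=
          add_le_add (gdist_v_w_le hi hkR hj1 hjC) (gdist_w_b_le hi hkR (C - j) j (by omega) hj1)
      _ = _ := by norm_cast; omega
  | d + 1, i, hk, hi => by
    calc gdist (gridW R C M) (.v i j) (.b k)
        ≤ dirW R C M (.v i j) (.u i j) +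
            (dirW R C M (.u i j) (.v (i + 1) j) + gdist (gridW R C M) (.v (i + 1) j) (.b k)) :=
          gdist_symW_le_add_add _ _ _ _
      _ ≤ 1 + (((2 * j - 1 : ℕ) : ℕ∞) + ((2 * R * (C - j + 1) + 2 * j * d +
            if M k j = true then 0 else 1 : ℕ) : ℕ∞)) := by
          gcongr
          · simp [dirW, hi, hj1, hjC, (by omega : i ≤ R)]
          · simp [dirW, hi, hj1, hjC, (by omega : i + 1 ≤ R)]
          · exact gdist_v_b_le hkR hj1 hjC d (i + 1) (by omega) (by omega)
      _ = _ := by rw [mul_add_one (2 * j) d]; norm_cast; omega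

lemma gdist_a_b_le (hk1 : 1 ≤ k) (hkR : k ≤ R) (hj1 : 1 ≤ j) (hjC : j ≤ C) :
    gdist (gridW R C M) (.a j) (.b k) ≤
      if M k j = true then ((2 * R * (C - j + 1) + 2 * j * k - 1 : ℕ) : ℕ∞)
      else ((2 * R * (C - j + 1) + 2 * j * k : ℕ) : ℕ∞) := by
  obtain ⟨d, rfl⟩ : ∃ d, k = d + 1 := ⟨k - 1, by omega⟩
  calc gdist (gridW R C M) (.a j) (.b (d + 1))
      ≤ dirW R C M (.a j) (.v 1 j) + gdist (gridW R C M) (.v 1 j) (.b (d + 1)) :=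
        gdist_symW_le_add _ _ _
    _ ≤ ((2 * j - 1 : ℕ) : ℕ∞) + ((2 * R * (C - j + 1) + 2 * j * d +
          if M (d + 1) j = true then 0 else 1 : ℕ) : ℕ∞) := by
        gcongr
        · simp [dirW, hj1, hjC]
        · exact gdist_v_b_le hkR hj1 hjC d 1 (by omega) le_rfl
    _ = _ := by rw [mul_add_one (2 * j) d]; split_ifs <;> norm_cast <;> omega

end GridEmbedding

/-- Corollary 2.1.  In the grid embedding `G_M` of a boolean `R × C`
matrix `M`, for all `1 ≤ k ≤ R` and `1 ≤ j ≤ C`, the distance between `a j` and `b k` is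
`2R·(C−j+1) + 2jk − 1` if `M k j = 1`, and `2R·(C−j+1) + 2jk` otherwise. -/
theorem grid_dist_a_b (R C : ℕ) (M : ℕ → ℕ → Bool) (k j : ℕ)
    (hk1 : 1 ≤ k) (hkR : k ≤ R) (hj1 : 1 ≤ j) (hjC : j ≤ C) :
    gdist (gridW R C M) (GV.a j) (GV.b k) =
      (if M k j = true then ((2 * R * (C - j + 1) + 2 * j * k - 1 : ℕ) : ℕ∞)
       else ((2 * R * (C - j + 1) + 2 * j * k : ℕ) : ℕ∞)) := by
  refine le_antisymm (GridEmbedding.gdist_a_b_le hk1 hkR hj1 hjC) ?_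
  have hlip := GridEmbedding.potential_lipschitz_dirW (R := R) (k := k) (M := M) hjC
  have hlower := natAbs_sub_le_gdist (natAbs_sub_le_symW hlip) (GV.a j) (GV.b k)
  rwa [GridEmbedding.natAbs_potential_a_b hk1 hj1 hjC, Nat.cast_ite] at hlower
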